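/- arXiv:1903.05389 — 14 statements merged into one kernel-verified Lean document; each statement's English description precedes it below -/
import Mathlib

section
/- Let E be a normed real vector space with strictly convex norm (i.e., the closed unit ball is strictly convex), let C ⊆ E be a convex compact set, and let f : C → C be 1-Lipschitz. Then the set of fixed points of f is nonempty, compact, and convex. -/
/-! The maps `x ↦ (1 - t) f x + t x₀` are contractions of `C` with constant `1 - t`; a fixed point
`c` of one of them has `‖f c - c‖ = t ‖f c - x₀‖ ≤ t diam C`, so the continuous function
`‖f x - x‖` attains the minimum `0` on the compact set `C`.

If `p`, `q` are fixed and `z = (1 - t) p + t q`, nonexpansiveness gives `‖f z - p‖ ≤ t ‖q - p‖`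
and `‖f z - q‖ ≤ (1 - t) ‖q - p‖`. Hence equality holds in the triangle inequality, which in a
strictly convex space puts `f z` on the segment `[p, q]` at parameter `t`, i.e. `f z = z`. -/

open Set Filter Topology Metric AffineMap

section NormedSpace

variable {E : Type*} [NormedAddCommGroup E] [NormedSpace ℝ E]
  {C : Set E} {f : E → E}

theorem strictConvexSpace_of_norm_midpoint_lt_one
    (h : ∀ x y : E, ‖x‖ = 1 → ‖y‖ = 1 → x ≠ y → ‖(1/2 : ℝ) • (x + y)‖ < 1) :
    StrictConvexSpace ℝ E :=
  StrictConvexSpace.of_norm_combo_lt_one fun x y hx hy hne =>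
    ⟨1/2, 1/2, by norm_num, by simpa [smul_add] using h x y hx hy hne⟩

theorem Convex.exists_lineMap_apply_eq_self (hC : Convex ℝ C) (hCc : IsComplete C)
    (hf : MapsTo f C C) (hlip : LipschitzOnWith 1 f C) {x₀ : E} (hx₀ : x₀ ∈ C) {t : ℝ}
    (ht₀ : 0 < t) (ht₁ : t ≤ 1) : ∃ c ∈ C, lineMap (f c) x₀ t = c := by
  set g : E → E := fun x => lineMap (f x) x₀ t
  have hg : MapsTo g C C := fun x hx => hC.lineMap_mem (hf hx) hx₀ ⟨ht₀.le, ht₁⟩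
  have hglip : LipschitzOnWith (Real.toNNReal (1 - t)) g C := by
    refine LipschitzOnWith.of_dist_le_mul fun x hx y hy => ?_
    calc dist (g x) (g y) = (1 - t) * dist (f x) (f y) := by
          simp only [g]
          rw [dist_eq_norm, lineMap_apply_module, lineMap_apply_module, add_sub_add_right_eq_sub,
            ← smul_sub, norm_smul, Real.norm_of_nonneg (sub_nonneg.2 ht₁), dist_eq_norm]
      _ ≤ Real.toNNReal (1 - t) * dist x y := by
          rw [Real.coe_toNNReal _ (sub_nonneg.2 ht₁)]
          exact mul_le_mul_of_nonneg_left (by simpa using hlip.dist_le_mul x hx y hy) (by linarith)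
  have hK : Real.toNNReal (1 - t) < 1 := by
    rw [Real.toNNReal_lt_one]; linarith
  obtain ⟨c, hc, hfix, -⟩ := ContractingWith.exists_fixedPoint' hCc hg
    ⟨hK, hglip.mapsToRestrict hg⟩ hx₀ (edist_ne_top _ _)
  exact ⟨c, hc, hfix⟩

theorem IsCompact.exists_fixedPoint_of_lipschitzOnWith_one (hCc : IsCompact C)
    (hC : Convex ℝ C) (hCne : C.Nonempty) (hf : MapsTo f C C)
    (hlip : LipschitzOnWith 1 f C) : ∃ x ∈ C, f x = x := by
  obtain ⟨x₀, hx₀⟩ := hCne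
  obtain ⟨x, hx, hmin⟩ := hCc.exists_isMinOn ⟨x₀, hx₀⟩
    (continuous_dist.comp_continuousOn (hlip.continuousOn.prodMk continuousOn_id))
  have hbound : ∀ t ∈ Ioc (0 : ℝ) 1, dist (f x) x ≤ t * diam C := by
    rintro t ⟨ht₀, ht₁⟩
    obtain ⟨c, hc, hcfix⟩ := hC.exists_lineMap_apply_eq_self hCc.isComplete hf hlip hx₀ ht₀ ht₁
    have hdist := dist_left_lineMap (f c) x₀ t
    rw [hcfix, Real.norm_of_nonneg ht₀.le] at hdist
    calc dist (f x) x ≤ dist (f c) c := hmin hc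
      _ = t * dist (f c) x₀ := hdist
      _ ≤ t * diam C := by gcongr; exact dist_le_diam_of_mem hCc.isBounded (hf hc) hx₀
  have hlim : Tendsto (fun t : ℝ => t * diam C) (𝓝[>] 0) (𝓝 0) := by
    simpa using ((tendsto_id (x := 𝓝 (0 : ℝ))).mul_const (diam C)).mono_left nhdsWithin_le_nhds
  exact ⟨x, hx, dist_le_zero.1 <| ge_of_tendsto hlim <|
    eventually_of_mem (Ioc_mem_nhdsGT one_pos) hbound⟩

end NormedSpace

section StrictConvex

variable {E : Type*} [NormedAddCommGroup E] [NormedSpace ℝ E] [StrictConvexSpace ℝ E]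
  {C : Set E} {f : E → E}

theorem eq_lineMap_of_dist_le_mul_of_dist_le_mul {x y z : E} {r : ℝ}
    (hxy : dist x y ≤ r * dist x z) (hyz : dist y z ≤ (1 - r) * dist x z) :
    y = lineMap x z r := by
  have htri := dist_triangle x y z
  exact eq_lineMap_of_dist_eq_mul_of_dist_eq_mul (by linarith) (by linarith)

theorem Convex.fixedPoints_of_lipschitzOnWith_one (hC : Convex ℝ C)
    (hlip : LipschitzOnWith 1 f C) : Convex ℝ {x ∈ C | f x = x} := by
  rintro p ⟨hp, hfp⟩ q ⟨hq, hfq⟩ a b ha hb hab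
  obtain rfl : a = 1 - b := by linarith
  rw [← lineMap_apply_module]
  have hzC : lineMap p q b ∈ C := hC.lineMap_mem hp hq ⟨hb, by linarith⟩
  refine ⟨hzC, eq_lineMap_of_dist_le_mul_of_dist_le_mul ?_ ?_⟩
  · calc dist p (f (lineMap p q b)) = dist (f p) (f (lineMap p q b)) := by rw [hfp]
      _ ≤ dist p (lineMap p q b) := by simpa using hlip.dist_le_mul p hp _ hzC
      _ = b * dist p q := by rw [dist_left_lineMap, Real.norm_of_nonneg hb]
  · calc dist (f (lineMap p q b)) q = dist (f (lineMap p q b)) (f q) := by rw [hfq]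
      _ ≤ dist (lineMap p q b) q := by simpa using hlip.dist_le_mul _ hzC q hq
      _ = (1 - b) * dist p q := by
          rw [dist_lineMap_right, Real.norm_of_nonneg (by linarith)]

end StrictConvex

theorem fixed_point_set_nonempty_compact_convex
    {E : Type*} [NormedAddCommGroup E] [NormedSpace ℝ E]
    (hsc : ∀ x y : E, ‖x‖ = 1 → ‖y‖ = 1 → x ≠ y → ‖(1/2 : ℝ) • (x + y)‖ < 1)
    (C : Set E) (hC : Convex ℝ C) (hCcpt : IsCompact C) (hCne : C.Nonempty)
    (f : E → E) (hf : MapsTo f C C) (hlip : LipschitzOnWith 1 f C) :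
    ({x ∈ C | f x = x}).Nonempty ∧ IsCompact {x ∈ C | f x = x} ∧
      Convex ℝ {x ∈ C | f x = x} := by
  have := strictConvexSpace_of_norm_midpoint_lt_one hsc
  refine ⟨hCcpt.exists_fixedPoint_of_lipschitzOnWith_one hC hCne hf hlip, ?_,
    hC.fixedPoints_of_lipschitzOnWith_one hlip⟩
  exact hCcpt.of_isClosed_subset
    (hCcpt.isClosed.isClosed_eq hlip.continuousOn continuousOn_id) (sep_subset _ _)
end

section
/- Let E be a real inner product space, C ⊆ E convex compact with 0 ∈ C, and f : C → C 1-Lipschitz. For λ ∈ (0,1), let y_λ be the unique point of C with λ f(y_λ) = y_λ. If 0 is not a fixed point of f, then for all 0 < λ < λ' < 1, ‖y_λ‖ < ‖y_{λ'}‖; i.e., λ ↦ ‖y_λ‖ is strictly increasing. -/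
/-!
Writing `f (y_λ) = λ⁻¹ • y_λ`, the points `y_λ` are eigenvectors of the nonexpansive map `f` with
eigenvalues `λ⁻¹ > 1`, nonzero because `f 0 ≠ 0`. For `u, v` and reals `μ, ν` with `μ ν ≥ 1`,
expanding both squares shows that
`‖μ • u - ν • v‖² - ‖u - v‖² - ((μ‖u‖ - ν‖v‖)² - (‖u‖ - ‖v‖)²) = 2 (μ ν - 1) (‖u‖ ‖v‖ - ⟪u, v⟫) ≥ 0`.
If `f u = μ • u`, `f v = ν • v` with `1 < ν < μ`, `v ≠ 0` and `‖v‖ ≤ ‖u‖`, then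
`0 ≤ ‖u‖ - ‖v‖ < μ ‖u‖ - ν ‖v‖`, so the inequality forces `‖u - v‖ < ‖f u - f v‖`, which is absurd.
-/

open Set

section InnerProductSpace

variable {E : Type*} [NormedAddCommGroup E] [InnerProductSpace ℝ E]

theorem sq_sub_sq_le_norm_smul_sub_smul_sq_sub_norm_sub_sq (u v : E) {μ ν : ℝ}
    (hμν : 1 ≤ μ * ν) :
    (μ * ‖u‖ - ν * ‖v‖) ^ 2 - (‖u‖ - ‖v‖) ^ 2 ≤ ‖μ • u - ν • v‖ ^ 2 - ‖u - v‖ ^ 2 := by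
  have hinner : inner ℝ u v ≤ ‖u‖ * ‖v‖ := real_inner_le_norm u v
  rw [norm_sub_sq_real, norm_sub_sq_real, real_inner_smul_left, real_inner_smul_right,
    norm_smul, norm_smul, mul_pow, mul_pow, Real.norm_eq_abs, Real.norm_eq_abs, sq_abs, sq_abs]
  nlinarith [mul_le_mul_of_nonneg_left hinner (sub_nonneg.2 hμν)]

theorem LipschitzOnWith.norm_lt_norm_of_eq_smul {f : E → E} {s : Set E}
    (hf : LipschitzOnWith 1 f s) {u v : E} (hu : u ∈ s) (hv : v ∈ s) {μ ν : ℝ}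
    (hfu : f u = μ • u) (hfv : f v = ν • v) (hν : 1 < ν) (hνμ : ν < μ) (hv0 : v ≠ 0) :
    ‖u‖ < ‖v‖ := by
  by_contra! hle
  have hv_pos : 0 < ‖v‖ := norm_pos_iff.2 hv0
  have hgap : ‖u‖ - ‖v‖ < μ * ‖u‖ - ν * ‖v‖ := by nlinarith
  have hsq : (‖u‖ - ‖v‖) ^ 2 < (μ * ‖u‖ - ν * ‖v‖) ^ 2 :=
    pow_lt_pow_left₀ hgap (sub_nonneg.2 hle) two_ne_zero
  have hexpand := sq_sub_sq_le_norm_smul_sub_smul_sq_sub_norm_sub_sq u v (μ := μ) (ν := ν)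
    (by nlinarith)
  have hlip : ‖f u - f v‖ ≤ ‖u - v‖ := by
    simpa [dist_eq_norm] using hf.dist_le_mul u hu v hv
  rw [hfu, hfv] at hlip
  nlinarith [pow_le_pow_left₀ (norm_nonneg _) hlip 2]

end InnerProductSpace

theorem ne_zero_of_smul_apply_eq {E : Type*} [AddCommGroup E] [Module ℝ E] {f : E → E}
    (hf0 : f 0 ≠ 0) {l : ℝ} (hl : l ≠ 0) {x : E} (hx : l • f x = x) : x ≠ 0 := by
  rintro rfl
  exact hf0 ((smul_eq_zero.1 hx).resolve_left hl)

theorem norm_ylam_strictMono_general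
    {E : Type*} [NormedAddCommGroup E] [InnerProductSpace ℝ E]
    (C : Set E)
    (f : E → E) (hlip : LipschitzOnWith 1 f C)
    (hf0 : f 0 ≠ 0)
    (y : ℝ → E) (hy : ∀ l ∈ Ioo (0:ℝ) 1, y l ∈ C ∧ l • f (y l) = y l) :
    ∀ l l' : ℝ, 0 < l → l < l' → l' < 1 → ‖y l‖ < ‖y l'‖ := by
  intro l l' hl hll' hl'
  have hl'_pos : 0 < l' := hl.trans hll'
  obtain ⟨hu, hfu⟩ := hy l ⟨hl, hll'.trans hl'⟩
  obtain ⟨hv, hfv⟩ := hy l' ⟨hl'_pos, hl'⟩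
  refine hlip.norm_lt_norm_of_eq_smul hu hv ((eq_inv_smul_iff₀ hl.ne').2 hfu)
    ((eq_inv_smul_iff₀ hl'_pos.ne').2 hfv) (one_lt_inv₀ hl'_pos |>.2 hl')
    (inv_strictAnti₀ hl hll') (ne_zero_of_smul_apply_eq hf0 hl'_pos.ne' hfv)

theorem norm_ylam_strictMono
    {E : Type*} [NormedAddCommGroup E] [InnerProductSpace ℝ E]
    (C : Set E) (hC : Convex ℝ C) (hCcpt : IsCompact C) (h0 : (0:E) ∈ C)
    (f : E → E) (hf : MapsTo f C C) (hlip : LipschitzOnWith 1 f C)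
    (hf0 : f 0 ≠ 0)
    (y : ℝ → E) (hy : ∀ l ∈ Ioo (0:ℝ) 1, y l ∈ C ∧ l • f (y l) = y l) :
    ∀ l l' : ℝ, 0 < l → l < l' → l' < 1 → ‖y l‖ < ‖y l'‖ :=
  norm_ylam_strictMono_general C f hlip hf0 y hy
end

section
/- Let E be a real inner product space, C ⊆ E convex compact with 0 ∈ C, and f : C → C 1-Lipschitz. For λ ∈ (0,1), let y_λ be the unique fixed point of x ↦ λ f(x). Then y_λ converges as λ → 1 to x*, the orthogonal projection of 0 onto the set Fix(f) of fixed points of f (that is, the unique point of Fix(f) of minimal norm). -/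
/-!
If `y = λ f y` and `x = f x`, nonexpansiveness gives `‖y - λ x‖ = λ ‖f y - f x‖ ≤ λ ‖y - x‖`,
which after expanding both squares becomes `‖y‖² ≤ ⟪y, x⟫` for every fixed point `x`.
By compactness it suffices to identify the cluster points `p` of `y_λ` as `λ → 1`: each is a fixed
point by continuity, and `‖p‖² ≤ ⟪p, x*⟫` in the limit, which together with `‖x*‖ ≤ ‖p‖`
forces `‖p - x*‖² ≤ ‖x*‖² - ‖p‖² ≤ 0`.
-/

open Set Filter Topology

open scoped RealInnerProductSpace

section

variable {E : Type*} [NormedAddCommGroup E] [InnerProductSpace ℝ E]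

theorem eq_of_norm_sq_le_inner_of_norm_le {p x : E} (hinner : ‖p‖ ^ 2 ≤ ⟪p, x⟫)
    (hnorm : ‖x‖ ≤ ‖p‖) : p = x := by
  have hsq : ‖p - x‖ ^ 2 ≤ 0 := by
    rw [norm_sub_sq_real]
    nlinarith [norm_nonneg x]
  rw [← sub_eq_zero, ← norm_eq_zero]
  exact pow_eq_zero_iff two_ne_zero |>.1 (le_antisymm hsq (sq_nonneg _))

theorem LipschitzOnWith.norm_sq_le_inner_of_smul_apply_eq {C : Set E} {f : E → E}
    (hf : LipschitzOnWith 1 f C) {x y : E} {l : ℝ} (hx : x ∈ C) (hy : y ∈ C) (hfx : f x = x)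
    (hl0 : 0 < l) (hl1 : l < 1) (hyl : l • f y = y) : ‖y‖ ^ 2 ≤ ⟪y, x⟫ := by
  have hfyx : ‖f y - f x‖ ≤ ‖y - x‖ := by
    simpa only [dist_eq_norm, NNReal.coe_one, one_mul] using hf.dist_le_mul y hy x hx
  have hcontract : ‖y - l • x‖ ≤ l * ‖y - x‖ :=
    calc ‖y - l • x‖ = ‖l • (f y - f x)‖ := by rw [smul_sub, hyl, hfx]
      _ = l * ‖f y - f x‖ := by rw [norm_smul, Real.norm_of_nonneg hl0.le]
      _ ≤ l * ‖y - x‖ := mul_le_mul_of_nonneg_left hfyx hl0.le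
  have hsq := pow_le_pow_left₀ (norm_nonneg _) hcontract 2
  rw [mul_pow, norm_sub_sq_real, norm_sub_sq_real, real_inner_smul_right, norm_smul,
    Real.norm_of_nonneg hl0.le, mul_pow] at hsq
  have hfactor : (1 - l) * ((1 + l) * ‖y‖ ^ 2 - 2 * l * ⟪y, x⟫) ≤ 0 := by
    linear_combination hsq
  have hscaled : (1 + l) * ‖y‖ ^ 2 ≤ 2 * l * ⟪y, x⟫ :=
    sub_nonpos.1 (nonpos_of_mul_nonpos_right hfactor (sub_pos.2 hl1))
  nlinarith

theorem ContinuousOn.apply_eq_of_tendsto_smul_apply_eq {C : Set E} {f : E → E}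
    (hf : ContinuousOn f C) {F : Filter ℝ} [F.NeBot] (hF : F ≤ 𝓝 1) {y : ℝ → E} {p : E}
    (hp : p ∈ C) (hyp : Tendsto y F (𝓝 p)) (hyC : ∀ᶠ l in F, y l ∈ C)
    (hyl : ∀ᶠ l in F, l • f (y l) = y l) : f p = p := by
  have hfy : Tendsto (fun l => f (y l)) F (𝓝 (f p)) :=
    (hf.continuousWithinAt hp).tendsto.comp (tendsto_nhdsWithin_iff.2 ⟨hyp, hyC⟩)
  have hl : Tendsto (fun l : ℝ => l) F (𝓝 1) := tendsto_id.mono_left hF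
  have hlfy : Tendsto (fun l => l • f (y l)) F (𝓝 (f p)) := by
    simpa only [one_smul] using hl.smul hfy
  exact tendsto_nhds_unique (hlfy.congr' hyl) hyp

end

theorem ylam_tendsto_projection_general
    {E : Type*} [NormedAddCommGroup E] [InnerProductSpace ℝ E]
    (C : Set E) (hCcpt : IsCompact C)
    (f : E → E) (hlip : LipschitzOnWith 1 f C)
    (y : ℝ → E) (hy : ∀ l ∈ Ioo (0:ℝ) 1, y l ∈ C ∧ l • f (y l) = y l)
    (xstar : E) (hxstar : xstar ∈ C ∧ f xstar = xstar ∧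
      ∀ z ∈ C, f z = z → ‖xstar‖ ≤ ‖z‖) :
    Tendsto y (nhdsWithin 1 (Ioo (0:ℝ) 1)) (nhds xstar) := by
  obtain ⟨hxC, hxfix, hxmin⟩ := hxstar
  have hmem : ∀ᶠ l in 𝓝[Ioo 0 1] (1 : ℝ), l ∈ Ioo (0 : ℝ) 1 := self_mem_nhdsWithin
  refine hCcpt.tendsto_nhds_of_unique_mapClusterPt (hmem.mono fun l hl => (hy l hl).1)
    fun p hpC hp => ?_
  obtain ⟨U, hU, hyU⟩ := mapClusterPt_iff_ultrafilter.1 hp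
  have hUmem : ∀ᶠ l in (U : Filter ℝ), l ∈ Ioo (0 : ℝ) 1 := hU hmem
  have hfp : f p = p :=
    hlip.continuousOn.apply_eq_of_tendsto_smul_apply_eq (hU.trans nhdsWithin_le_nhds) hpC hyU
      (hUmem.mono fun l hl => (hy l hl).1) (hUmem.mono fun l hl => (hy l hl).2)
  have hinner : ‖p‖ ^ 2 ≤ ⟪p, xstar⟫ :=
    le_of_tendsto_of_tendsto (hyU.norm.pow 2) (hyU.inner tendsto_const_nhds) <|
      hUmem.mono fun l hl => hlip.norm_sq_le_inner_of_smul_apply_eq hxC (hy l hl).1 hxfix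
        hl.1 hl.2 (hy l hl).2
  exact eq_of_norm_sq_le_inner_of_norm_le hinner (hxmin p hpC hfp)

theorem ylam_tendsto_projection
    {E : Type*} [NormedAddCommGroup E] [InnerProductSpace ℝ E]
    (C : Set E) (hC : Convex ℝ C) (hCcpt : IsCompact C) (h0 : (0:E) ∈ C)
    (f : E → E) (hf : MapsTo f C C) (hlip : LipschitzOnWith 1 f C)
    (y : ℝ → E) (hy : ∀ l ∈ Ioo (0:ℝ) 1, y l ∈ C ∧ l • f (y l) = y l)
    (xstar : E) (hxstar : xstar ∈ C ∧ f xstar = xstar ∧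
      ∀ z ∈ C, f z = z → ‖xstar‖ ≤ ‖z‖) :
    Tendsto y (nhdsWithin 1 (Ioo (0:ℝ) 1)) (nhds xstar) :=
  ylam_tendsto_projection_general C hCcpt f hlip y hy xstar hxstar
end

section
/- Let E be a real inner product space, C ⊆ E convex compact with 0 ∈ C, f : C → C 1-Lipschitz, and for λ ∈ (0,1) let y_λ satisfy λ f(y_λ) = y_λ. Then for every fixed point y of f and every λ ∈ (0,1), ⟨y_λ, y_λ − y⟩ ≤ 0. -/
open Set

/-! Since `f y_λ = λ⁻¹ • y_λ`, we have `f y_λ - f y = (y_λ - y) + t • y_λ` with `t = λ⁻¹ - 1 > 0`.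
Nonexpansiveness gives `‖v + t • y_λ‖ ≤ ‖v‖` for `v = y_λ - y`, and expanding the square yields
`2 t ⟪y_λ, v⟫ + t² ‖y_λ‖² ≤ 0`. -/

theorem inner_nonpos_of_norm_add_smul_le {E : Type*} [NormedAddCommGroup E]
    [InnerProductSpace ℝ E] {x v : E} {t : ℝ} (ht : 0 < t) (h : ‖v + t • x‖ ≤ ‖v‖) :
    inner ℝ x v ≤ 0 := by
  have hsq : ‖v + t • x‖ ^ 2 ≤ ‖v‖ ^ 2 := pow_le_pow_left₀ (norm_nonneg _) h 2
  have hexpand : ‖v + t • x‖ ^ 2 = ‖v‖ ^ 2 + 2 * t * inner ℝ x v + t ^ 2 * ‖x‖ ^ 2 := by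
    rw [norm_add_sq_real, real_inner_smul_right, norm_smul, Real.norm_of_nonneg ht.le,
      real_inner_comm]
    ring
  nlinarith [sq_nonneg (t * ‖x‖)]

theorem inner_ylam_sub_fixed_nonpos_general
    {E : Type*} [NormedAddCommGroup E] [InnerProductSpace ℝ E]
    (C : Set E)
    (f : E → E) (hlip : LipschitzOnWith 1 f C)
    (l : ℝ) (hl : l ∈ Ioo (0:ℝ) 1)
    (ylam : E) (hylam : ylam ∈ C) (hfix : l • f ylam = ylam)
    (y : E) (hy : y ∈ C) (hfy : f y = y) :
    (inner ℝ ylam (ylam - y) : ℝ) ≤ 0 := by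
  obtain ⟨hl0, hl1⟩ := hl
  have hf_ylam : f ylam = l⁻¹ • ylam := (eq_inv_smul_iff₀ hl0.ne').mpr hfix
  have hdecomp : f ylam - f y = (ylam - y) + (l⁻¹ - 1) • ylam := by
    rw [hf_ylam, hfy, sub_smul, one_smul]
    abel
  have hnonexp : ‖(ylam - y) + (l⁻¹ - 1) • ylam‖ ≤ ‖ylam - y‖ := by
    simpa [dist_eq_norm, hdecomp] using hlip.dist_le_mul ylam hylam y hy
  exact inner_nonpos_of_norm_add_smul_le (sub_pos.2 ((one_lt_inv₀ hl0).2 hl1)) hnonexp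

theorem inner_ylam_sub_fixed_nonpos
    {E : Type*} [NormedAddCommGroup E] [InnerProductSpace ℝ E]
    (C : Set E) (hC : Convex ℝ C) (hCcpt : IsCompact C) (h0 : (0:E) ∈ C)
    (f : E → E) (hf : MapsTo f C C) (hlip : LipschitzOnWith 1 f C)
    (l : ℝ) (hl : l ∈ Ioo (0:ℝ) 1)
    (ylam : E) (hylam : ylam ∈ C) (hfix : l • f ylam = ylam)
    (y : E) (hy : y ∈ C) (hfy : f y = y) :
    (inner ℝ ylam (ylam - y) : ℝ) ≤ 0 :=
  inner_ylam_sub_fixed_nonpos_general C f hlip l hl ylam hylam hfix y hy hfy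
end

section
/- Let E be a normed real vector space whose norm is Gateaux-differentiable away from 0, with differential ℓ_x at x ≠ 0 (so ‖ℓ_x‖ = 1 and ℓ_x(x) = ‖x‖). Let f : C → C be 1-Lipschitz on C ⊆ E. Then for all x ≠ y in C, ℓ_{x−y}((x − f(x)) − (y − f(y))) ≥ 0. -/
theorem supporting_functional_monotone
    {E : Type*} [NormedAddCommGroup E] [NormedSpace ℝ E]
    (ℓ : E → (E →L[ℝ] ℝ))
    (hℓ : ∀ x : E, x ≠ 0 → ‖ℓ x‖ = 1 ∧ ℓ x x = ‖x‖)
    (C : Set E) (f : E → E) (hf : Set.MapsTo f C C)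
    (hlip : ∀ x ∈ C, ∀ y ∈ C, ‖f x - f y‖ ≤ ‖x - y‖) :
    ∀ x ∈ C, ∀ y ∈ C, x ≠ y → 0 ≤ ℓ (x - y) ((x - f x) - (y - f y)) := by
  intro x hx y hy hxy
  have hu : x - y ≠ 0 := sub_ne_zero.mpr hxy
  obtain ⟨hn, hv⟩ := hℓ _ hu
  have key : (x - f x) - (y - f y) = (x - y) - (f x - f y) := by abel
  rw [key, map_sub, hv]
  have h1 : ℓ (x - y) (f x - f y) ≤ ‖f x - f y‖ := by
    calc ℓ (x - y) (f x - f y) ≤ ‖ℓ (x - y) (f x - f y)‖ := le_abs_self _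
    _ ≤ ‖ℓ (x - y)‖ * ‖f x - f y‖ := (ℓ (x - y)).le_opNorm _
    _ = ‖f x - f y‖ := by rw [hn, one_mul]
  linarith [hlip x hx y hy]
end

section
/- Let E be a real normed space. Suppose for every x ≠ 0 there is a unique ℓ_x ∈ E* with ‖ℓ_x‖ = 1 and ℓ_x(x) = ‖x‖. Let F ⊆ E and suppose ȳ, z ∈ F with ȳ ≠ z both satisfy: for all y ∈ F \ {ȳ}, ℓ_{ȳ−y}(ȳ) ≤ 0, and for all y ∈ F \ {z}, ℓ_{z−y}(z) ≤ 0. Then this leads to a contradiction; i.e., at most one point of F can satisfy this property. -/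
theorem at_most_one_point_with_property
    {E : Type*} [NormedAddCommGroup E] [NormedSpace ℝ E]
    (ℓ : E → (E →L[ℝ] ℝ))
    (hℓ : ∀ x : E, x ≠ 0 → ‖ℓ x‖ = 1 ∧ ℓ x x = ‖x‖)
    (huniq : ∀ x : E, x ≠ 0 → ∀ g : E →L[ℝ] ℝ, ‖g‖ = 1 → g x = ‖x‖ → g = ℓ x)
    (F : Set E) (ybar z : E) (hybar : ybar ∈ F) (hz : z ∈ F) (hne : ybar ≠ z)
    (h1 : ∀ y ∈ F, y ≠ ybar → ℓ (ybar - y) ybar ≤ 0)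
    (h2 : ∀ y ∈ F, y ≠ z → ℓ (z - y) z ≤ 0) :
    False := by
  set x := ybar - z with hx
  have hx0 : x ≠ 0 := sub_ne_zero.mpr hne
  have hnx0 : -x ≠ 0 := neg_ne_zero.mpr hx0
  obtain ⟨hn1, hv1⟩ := hℓ x hx0
  have hneg : ℓ (-x) = -ℓ x := by
    have := huniq (-x) hnx0 (-ℓ x) (by simpa using hn1)
      (by simp [hv1])
    exact this.symm
  have ha : ℓ x ybar ≤ 0 := h1 z hz (Ne.symm hne)
  have hb : ℓ (z - ybar) z ≤ 0 := h2 ybar hybar hne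
  have hb' : ℓ x z ≥ 0 := by
    have : z - ybar = -x := by simp [hx]
    rw [this, hneg] at hb
    simpa using hb
  have : ℓ x x ≤ 0 := by
    have := sub_nonpos.mpr (le_trans ha hb')
    simpa [hx, map_sub] using sub_nonpos.mpr (ha.trans hb')
  rw [hv1] at this
  exact absurd this (not_le.mpr (norm_pos_iff.mpr hx0))
end

section
/- Let E be a normed real vector space whose norm is C¹ on E \ {0}, C ⊆ E a convex compact subset with 0 ∈ C, and f : C → C a 1-Lipschitz map. For λ ∈ (0,1), let y_λ be the unique fixed point of x ↦ λ f(x). Then the family (y_λ) converges as λ → 1 (to a fixed point ȳ of f characterized by ℓ_{ȳ−y}(ȳ) ≤ 0 for all fixed points y ≠ ȳ). -/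
/-!
Write `ℓ_x` for the derivative of the norm at `x`. If `w = λ f w` with `λ < 1` and `z` is a fixed
point of the nonexpansive map `f`, then `ℓ_{w-z}(f w - z) ≤ ‖f w - z‖ ≤ ‖w - z‖ = ℓ_{w-z}(w - z)`,
so `ℓ_{w-z}(f w) ≤ ℓ_{w-z}(w) = λ ℓ_{w-z}(f w)` and hence `ℓ_{w-z}(w) ≤ 0`. By continuity of `ℓ`
off `0`, this variational inequality passes to every cluster point of `y_λ` as `λ → 1`, and such a
cluster point is a fixed point of `f`. Two fixed points `a ≠ b` cannot both satisfy it, since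
`ℓ_{b-a} = -ℓ_{a-b}` would give `‖a - b‖ = ℓ_{a-b}(a) - ℓ_{a-b}(b) ≤ 0`. So by compactness of `C`
the family converges to its unique cluster point.
-/

open Set Filter Topology

section NormDerivative

variable {E : Type*} [NormedAddCommGroup E] [NormedSpace ℝ E]

theorem contDiffAt_norm_of_ne_zero (hnorm : ContDiffOn ℝ 1 (‖·‖) ({0}ᶜ : Set E)) {x : E}
    (hx : x ≠ 0) : ContDiffAt ℝ 1 (‖·‖) x :=
  hnorm.contDiffAt (isOpen_compl_singleton.mem_nhds hx)

theorem fderiv_norm_apply_le (x v : E) : fderiv ℝ (‖·‖) x v ≤ ‖v‖ := by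
  have hx : ‖fderiv ℝ (‖·‖) x‖ ≤ 1 := by
    simpa using norm_fderiv_le_of_lipschitz ℝ (lipschitzWith_one_norm (E := E))
  calc fderiv ℝ (‖·‖) x v ≤ ‖fderiv ℝ (‖·‖) x v‖ := le_abs_self _
    _ ≤ ‖fderiv ℝ (‖·‖) x‖ * ‖v‖ := (fderiv ℝ (‖·‖) x).le_opNorm v
    _ ≤ ‖v‖ := mul_le_of_le_one_left (norm_nonneg v) hx

theorem fderiv_norm_neg (x : E) : fderiv ℝ (‖·‖) (-x) = -fderiv ℝ (‖·‖) x := by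
  simpa using fderiv_norm_smul_neg (x := x) (t := -1) (by norm_num)

theorem LipschitzOnWith.fderiv_norm_sub_apply_nonpos {s : Set E} {f : E → E}
    (hf : LipschitzOnWith 1 f s) {l : ℝ} (hl₀ : 0 ≤ l) (hl₁ : l < 1) {w z : E} (hw : w ∈ s)
    (hz : z ∈ s) (hfw : l • f w = w) (hfz : f z = z) (hd : DifferentiableAt ℝ (‖·‖) (w - z)) :
    fderiv ℝ (‖·‖) (w - z) w ≤ 0 := by
  set φ := fderiv ℝ (‖·‖) (w - z)
  have hcontr : φ (f w - z) ≤ φ (w - z) := calc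
    φ (f w - z) ≤ ‖f w - z‖ := fderiv_norm_apply_le _ _
    _ ≤ ‖w - z‖ := by simpa [hfz, dist_eq_norm] using hf.dist_le_mul w hw z hz
    _ = φ (w - z) := hd.fderiv_norm_self.symm
  have hφw : φ w = l * φ (f w) := by rw [← smul_eq_mul, ← map_smul, hfw]
  rw [map_sub, map_sub] at hcontr
  nlinarith

theorem eq_of_fderiv_norm_sub_apply_nonpos {a b : E} (hd : DifferentiableAt ℝ (‖·‖) (a - b))
    (ha : fderiv ℝ (‖·‖) (a - b) a ≤ 0) (hb : fderiv ℝ (‖·‖) (b - a) b ≤ 0) : a = b := by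
  rw [← neg_sub, fderiv_norm_neg, neg_apply, neg_nonpos] at hb
  have hab : ‖a - b‖ ≤ 0 := by
    rw [← hd.fderiv_norm_self, map_sub]
    linarith
  exact sub_eq_zero.1 (norm_le_zero_iff.1 hab)

theorem fderiv_norm_sub_apply_nonpos_of_tendsto {ι : Type*} {U : Filter ι} [U.NeBot]
    {u : ι → E} {a z : E} (hu : Tendsto u U (𝓝 a))
    (hc : ContinuousAt (fderiv ℝ (‖·‖)) (a - z))
    (h : ∀ᶠ i in U, fderiv ℝ (‖·‖) (u i - z) (u i) ≤ 0) : fderiv ℝ (‖·‖) (a - z) a ≤ 0 := by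
  have hφ : Tendsto (fun i => fderiv ℝ (‖·‖) (u i - z)) U (𝓝 (fderiv ℝ (‖·‖) (a - z))) :=
    hc.tendsto.comp (hu.sub_const z)
  exact le_of_tendsto
    ((isBoundedBilinearMap_apply.continuous.tendsto _).comp (hφ.prodMk_nhds hu)) h

theorem isFixedPt_of_tendsto_smul {ι : Type*} {U : Filter ι} [U.NeBot] {s : Set E} {f : E → E}
    {c : ι → ℝ} {u : ι → E} {a : E}
    (hf : ContinuousWithinAt f s a) (hc : Tendsto c U (𝓝 1)) (hu : Tendsto u U (𝓝 a))
    (hs : ∀ᶠ i in U, u i ∈ s) (hfix : ∀ᶠ i in U, c i • f (u i) = u i) :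
    Function.IsFixedPt f a := by
  have hcf : Tendsto (fun i => c i • f (u i)) U (𝓝 ((1 : ℝ) • f a)) :=
    hc.smul (hf.tendsto.comp (tendsto_nhdsWithin_iff.2 ⟨hu, hs⟩))
  rw [one_smul] at hcf
  exact tendsto_nhds_unique hcf (hu.congr' (EventuallyEq.symm hfix))

theorem isFixedPt_and_fderiv_norm_sub_apply_nonpos_of_mapClusterPt
    (hnorm : ContDiffOn ℝ 1 (‖·‖) ({0}ᶜ : Set E)) {C : Set E} (hC : IsClosed C) {f : E → E}
    (hlip : LipschitzOnWith 1 f C) {y : ℝ → E}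
    (hy : ∀ l ∈ Ioo (0 : ℝ) 1, y l ∈ C ∧ l • f (y l) = y l) {a : E}
    (ha : MapClusterPt a (𝓝[<] 1) y) :
    a ∈ C ∧ f a = a ∧ ∀ z ∈ C, f z = z → z ≠ a → fderiv ℝ (‖·‖) (a - z) a ≤ 0 := by
  obtain ⟨U, hU, hUa⟩ := mapClusterPt_iff_ultrafilter.1 ha
  have hUI : ∀ᶠ l in (U : Filter ℝ), l ∈ Ioo 0 1 := hU (Ioo_mem_nhdsLT zero_lt_one)
  have hUC : ∀ᶠ l in (U : Filter ℝ), y l ∈ C := hUI.mono fun l hl => (hy l hl).1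
  have haC : a ∈ C := hC.mem_of_tendsto hUa hUC
  have hU1 : Tendsto id (U : Filter ℝ) (𝓝 1) := tendsto_id.mono_left (hU.trans nhdsWithin_le_nhds)
  refine ⟨haC, isFixedPt_of_tendsto_smul (hlip.continuousOn a haC) hU1 hUa hUC
    (hUI.mono fun l hl => (hy l hl).2), fun z hz hfz hza => ?_⟩
  refine fderiv_norm_sub_apply_nonpos_of_tendsto hUa
    ((contDiffAt_norm_of_ne_zero hnorm (sub_ne_zero.2 hza.symm)).continuousAt_fderiv one_ne_zero) ?_
  filter_upwards [hUI, hUa.eventually_ne hza.symm] with l hl hne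
  exact hlip.fderiv_norm_sub_apply_nonpos hl.1.le hl.2 (hy l hl).1 hz (hy l hl).2 hfz
    ((contDiffAt_norm_of_ne_zero hnorm (sub_ne_zero.2 hne)).differentiableAt one_ne_zero)

end NormDerivative

theorem ylam_converges_C1_norm_general
    {E : Type*} [NormedAddCommGroup E] [NormedSpace ℝ E]
    (hnorm : ContDiffOn ℝ 1 (fun x : E => ‖x‖) {(0:E)}ᶜ)
    (C : Set E) (hCcpt : IsCompact C)
    (f : E → E) (hlip : LipschitzOnWith 1 f C)
    (y : ℝ → E) (hy : ∀ l ∈ Ioo (0:ℝ) 1, y l ∈ C ∧ l • f (y l) = y l) :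
    ∃ ybar ∈ C, f ybar = ybar ∧
      Tendsto y (nhdsWithin 1 (Ioo (0:ℝ) 1)) (nhds ybar) ∧
      ∀ z ∈ C, f z = z → z ≠ ybar →
        fderiv ℝ (fun x : E => ‖x‖) (ybar - z) ybar ≤ 0 := by
  have hcluster {a : E} (ha : MapClusterPt a (𝓝[<] 1) y) :=
    isFixedPt_and_fderiv_norm_sub_apply_nonpos_of_mapClusterPt hnorm hCcpt.isClosed hlip hy ha
  have hyC : ∀ᶠ l in 𝓝[<] (1 : ℝ), y l ∈ C :=
    Filter.mem_of_superset (Ioo_mem_nhdsLT zero_lt_one) fun l hl => (hy l hl).1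
  rw [nhdsWithin_Ioo_eq_nhdsLT zero_lt_one]
  obtain ⟨a, -, ha⟩ := hCcpt.exists_mapClusterPt (tendsto_principal.2 hyC)
  obtain ⟨haC, hfa, hVIa⟩ := hcluster ha
  refine ⟨a, haC, hfa, hCcpt.tendsto_nhds_of_unique_mapClusterPt hyC fun b _ hb => ?_, hVIa⟩
  obtain ⟨hbC, hfb, hVIb⟩ := hcluster hb
  by_contra hba
  exact hba <| eq_of_fderiv_norm_sub_apply_nonpos
    ((contDiffAt_norm_of_ne_zero hnorm (sub_ne_zero.2 hba)).differentiableAt one_ne_zero)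
    (hVIb a haC hfa (Ne.symm hba)) (hVIa b hbC hfb hba)

theorem ylam_converges_C1_norm
    {E : Type*} [NormedAddCommGroup E] [NormedSpace ℝ E]
    (hnorm : ContDiffOn ℝ 1 (fun x : E => ‖x‖) {(0:E)}ᶜ)
    (C : Set E) (hC : Convex ℝ C) (hCcpt : IsCompact C) (h0 : (0:E) ∈ C)
    (f : E → E) (hf : MapsTo f C C) (hlip : LipschitzOnWith 1 f C)
    (y : ℝ → E) (hy : ∀ l ∈ Ioo (0:ℝ) 1, y l ∈ C ∧ l • f (y l) = y l) :
    ∃ ybar ∈ C, f ybar = ybar ∧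
      Tendsto y (nhdsWithin 1 (Ioo (0:ℝ) 1)) (nhds ybar) ∧
      ∀ z ∈ C, f z = z → z ≠ ybar →
        fderiv ℝ (fun x : E => ‖x‖) (ybar - z) ybar ≤ 0 :=
  ylam_converges_C1_norm_general hnorm C hCcpt f hlip y hy
end

section
/- Let E be a separable real normed space with smooth (Gateaux-differentiable away from 0) norm, C ⊆ E convex compact with 0 ∈ C, f : C → C 1-Lipschitz, and y_λ the unique fixed point of x ↦ λ f(x) for λ ∈ (0,1). Then y_λ converges as λ → 1. -/
/-!
For a fixed point `p` of `f`, nonexpansiveness gives `‖y_λ - λ p‖ ≤ λ ‖y_λ - p‖`, and convexity of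
`r ↦ ‖y_λ - p + r p‖` turns this into `(1 + s) ‖y_λ - p‖ ≤ ‖y_λ - p - s p‖` for all `s ≥ 0`: an
inequality free of `λ`, which therefore passes to every cluster point of `y_λ` as `λ → 1`. Cluster
points are fixed points of `f`, so two of them, `u` and `v`, satisfy it with respect to each other.
Differentiating at `s = 0` gives `ℓ (u - v) (-v) ≥ ‖u - v‖` and `ℓ (u - v) u ≥ ‖u - v‖`, whose sum
contradicts `ℓ (u - v) (u - v) = ‖u - v‖` unless `u = v`. By compactness, the unique cluster point is a
limit.
-/

open Set Filter Topology Function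

theorem MapClusterPt.isFixedPt_of_tendsto_sub_zero {X ι : Type*} [TopologicalSpace X] [AddGroup X]
    [IsTopologicalAddGroup X] [T2Space X] {f : X → X} {C : Set X} (hC : IsClosed C)
    (hf : ContinuousOn f C) {F : Filter ι} {y : ι → X} (hyC : ∀ᶠ i in F, y i ∈ C)
    (hy : Tendsto (fun i => y i - f (y i)) F (𝓝 0)) {u : X} (hu : MapClusterPt u F y) :
    IsFixedPt f u := by
  have huC : u ∈ C := hC.mem_of_mapClusterPt hu hyC
  have hlim : Tendsto (fun z => z - f z) (𝓝 u ⊓ map y F) (𝓝 (u - f u)) :=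
    (continuousWithinAt_id.sub (hf u huC)).mono_left
      (le_inf inf_le_left (inf_le_right.trans (le_principal_iff.2 hyC)))
  have hcl : ClusterPt (u - f u) (𝓝 0) := (hu.tendsto_comp' hlim).clusterPt.mono hy
  exact (sub_eq_zero.1 (eq_of_nhds_neBot hcl)).symm

theorem IsCompact.exists_tendsto_of_mapClusterPt_subsingleton {X ι : Type*} [TopologicalSpace X]
    {s : Set X} (hs : IsCompact s) {l : Filter ι} [l.NeBot] {f : ι → X}
    (hmem : ∀ᶠ i in l, f i ∈ s)
    (h : ∀ x ∈ s, ∀ x' ∈ s, MapClusterPt x l f → MapClusterPt x' l f → x = x') :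
    ∃ y, Tendsto f l (𝓝 y) := by
  obtain ⟨y, hys, hy⟩ := hs.exists_mapClusterPt (le_principal_iff.2 hmem)
  exact ⟨y, hs.tendsto_nhds_of_unique_mapClusterPt hmem fun x hxs hx => h x hxs y hys hx hy⟩

section NormedSpace

variable {E : Type*} [NormedAddCommGroup E] [NormedSpace ℝ E]

theorem one_add_mul_norm_le_norm_sub_smul {x w : E} {t : ℝ} (ht : 0 < t)
    (hxt : ‖x + t • w‖ ≤ (1 - t) * ‖x‖) {s : ℝ} (hs : 0 ≤ s) :
    (1 + s) * ‖x‖ ≤ ‖x - s • w‖ := by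
  have hcomb : (s + t) • x = t • (x - s • w) + s • (x + t • w) := by module
  have htri : (s + t) * ‖x‖ ≤ t * ‖x - s • w‖ + s * ‖x + t • w‖ := by
    have := norm_add_le (t • (x - s • w)) (s • (x + t • w))
    rwa [← hcomb, norm_smul_of_nonneg (by positivity), norm_smul_of_nonneg ht.le,
      norm_smul_of_nonneg hs] at this
  nlinarith [mul_le_mul_of_nonneg_left hxt hs]

theorem one_add_mul_norm_sub_le_of_smul_apply_eq {f : E → E} {y p : E} {l : ℝ}
    (hl₀ : 0 ≤ l) (hl₁ : l < 1) (hy : l • f y = y) (hp : IsFixedPt f p)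
    (hfyp : ‖f y - f p‖ ≤ ‖y - p‖) {s : ℝ} (hs : 0 ≤ s) :
    (1 + s) * ‖y - p‖ ≤ ‖y - p - s • p‖ := by
  refine one_add_mul_norm_le_norm_sub_smul (t := 1 - l) (sub_pos.2 hl₁) ?_ hs
  have hcontr : y - p + (1 - l) • p = l • (f y - f p) := by
    rw [hp.eq, smul_sub, hy]; module
  rw [hcontr, norm_smul_of_nonneg hl₀, sub_sub_cancel]
  exact mul_le_mul_of_nonneg_left hfyp hl₀

theorem tendsto_sub_apply_nhds_zero_of_smul_apply_eq {f : E → E} {F : Filter ℝ} {y : ℝ → E}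
    (hF : F ≤ 𝓝 1) (hbdd : IsBoundedUnder (· ≤ ·) F fun l => ‖f (y l)‖)
    (hy : ∀ᶠ l in F, l • f (y l) = y l) : Tendsto (fun l => y l - f (y l)) F (𝓝 0) := by
  have hlim : Tendsto (fun l : ℝ => l - 1) F (𝓝 0) := tendsto_sub_nhds_zero_iff.2 hF
  refine (hlim.zero_smul_isBoundedUnder_le hbdd).congr' ?_
  filter_upwards [hy] with l hl
  rw [sub_smul, one_smul, hl]

theorem norm_le_of_tendsto_norm_add_smul {x w : E} {d : ℝ}
    (hd : Tendsto (fun t : ℝ => (‖x + t • w‖ - ‖x‖) / t) (𝓝[>] 0) (𝓝 d))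
    (h : ∀ s > 0, (1 + s) * ‖x‖ ≤ ‖x + s • w‖) : ‖x‖ ≤ d :=
  ge_of_tendsto hd <| eventually_nhdsWithin_of_forall fun t (ht : 0 < t) =>
    (le_div_iff₀ ht).2 (by linarith [h t ht])

theorem eq_norm_of_tendsto_norm_add_smul_self {x : E} {d : ℝ}
    (hd : Tendsto (fun t : ℝ => (‖x + t • x‖ - ‖x‖) / t) (𝓝[>] 0) (𝓝 d)) : d = ‖x‖ := by
  refine tendsto_nhds_unique hd (tendsto_const_nhds.congr' ?_)
  filter_upwards [self_mem_nhdsWithin] with t (ht : 0 < t)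
  rw [show x + t • x = (1 + t) • x by module, norm_smul_of_nonneg (by positivity)]
  field_simp
  ring

theorem eq_of_one_add_mul_norm_sub_le {g : E →ₗ[ℝ] ℝ} {u v : E}
    (hg : ∀ w, Tendsto (fun t : ℝ => (‖u - v + t • w‖ - ‖u - v‖) / t) (𝓝[>] 0) (𝓝 (g w)))
    (huv : ∀ s > 0, (1 + s) * ‖u - v‖ ≤ ‖u - v - s • v‖)
    (hvu : ∀ s > 0, (1 + s) * ‖v - u‖ ≤ ‖v - u - s • u‖) : u = v := by
  have hv : ‖u - v‖ ≤ g (-v) := norm_le_of_tendsto_norm_add_smul (hg (-v)) fun s hs => by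
    simpa only [smul_neg, ← sub_eq_add_neg] using huv s hs
  have hu : ‖u - v‖ ≤ g u := norm_le_of_tendsto_norm_add_smul (hg u) fun s hs => by
    have hneg : v - u - s • u = -(u - v + s • u) := by abel
    simpa only [norm_sub_rev v u, hneg, norm_neg] using hvu s hs
  have hself : g (u - v) = ‖u - v‖ := eq_norm_of_tendsto_norm_add_smul_self (hg (u - v))
  rw [sub_eq_add_neg, map_add, ← sub_eq_add_neg] at hself
  exact sub_eq_zero.1 (norm_le_zero_iff.1 (by linarith))

end NormedSpace

theorem ylam_converges_smooth_norm_general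
    {E : Type*} [NormedAddCommGroup E] [NormedSpace ℝ E]
    (ℓ : E → (E →L[ℝ] ℝ))
    (hgateaux : ∀ x : E, x ≠ 0 → ∀ v : E,
      Tendsto (fun t : ℝ => (‖x + t • v‖ - ‖x‖) / t) (nhdsWithin 0 {(0:ℝ)}ᶜ)
        (nhds (ℓ x v)))
    (C : Set E) (hCcpt : IsCompact C)
    (f : E → E) (hf : MapsTo f C C) (hlip : LipschitzOnWith 1 f C)
    (y : ℝ → E) (hy : ∀ l ∈ Ioo (0:ℝ) 1, y l ∈ C ∧ l • f (y l) = y l) :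
    ∃ ybar : E, Tendsto y (nhdsWithin 1 (Ioo (0:ℝ) 1)) (nhds ybar) := by
  have := right_nhdsWithin_Ioo_neBot (zero_lt_one' ℝ)
  have hyC : ∀ᶠ l in 𝓝[Ioo 0 1] (1 : ℝ), y l ∈ C :=
    eventually_nhdsWithin_of_forall fun l hl => (hy l hl).1
  obtain ⟨M, hM⟩ := hCcpt.isBounded.exists_norm_le
  have happrox : Tendsto (fun l => y l - f (y l)) (𝓝[Ioo 0 1] 1) (𝓝 0) :=
    tendsto_sub_apply_nhds_zero_of_smul_apply_eq nhdsWithin_le_nhds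
      (isBoundedUnder_of_eventually_le (hyC.mono fun l hl => hM _ (hf hl)))
      (eventually_nhdsWithin_of_forall fun l hl => (hy l hl).2)
  have hfix : ∀ u, MapClusterPt u (𝓝[Ioo 0 1] 1) y → IsFixedPt f u := fun u hu =>
    hu.isFixedPt_of_tendsto_sub_zero hCcpt.isClosed hlip.continuousOn hyC happrox
  have hgrowth : ∀ u, MapClusterPt u (𝓝[Ioo 0 1] 1) y → ∀ p ∈ C, IsFixedPt f p →
      ∀ s > 0, (1 + s) * ‖u - p‖ ≤ ‖u - p - s • p‖ := by
    intro u hu p hpC hp s hs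
    refine (isClosed_le (f := fun z => (1 + s) * ‖z - p‖) (g := fun z => ‖z - p - s • p‖)
      (by fun_prop) (by fun_prop)).mem_of_mapClusterPt hu ?_
    filter_upwards [self_mem_nhdsWithin] with l hl
    refine one_add_mul_norm_sub_le_of_smul_apply_eq hl.1.le hl.2 (hy l hl).2 hp ?_ hs.le
    simpa only [dist_eq_norm, NNReal.coe_one, one_mul] using
      hlip.dist_le_mul _ (hy l hl).1 _ hpC
  refine hCcpt.exists_tendsto_of_mapClusterPt_subsingleton hyC fun u huC v hvC hu hv => ?_
  by_contra huv
  refine huv (eq_of_one_add_mul_norm_sub_le (g := (ℓ (u - v) : E →ₗ[ℝ] ℝ)) (fun w => ?_)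
    (hgrowth u hu v hvC (hfix v hv)) (hgrowth v hv u huC (hfix u hu)))
  exact (hgateaux _ (sub_ne_zero.2 huv) w).mono_left
    (nhdsWithin_mono _ fun t (ht : 0 < t) => ht.ne')

theorem ylam_converges_smooth_norm
    {E : Type*} [NormedAddCommGroup E] [NormedSpace ℝ E]
    [TopologicalSpace.SeparableSpace E]
    (ℓ : E → (E →L[ℝ] ℝ))
    (hℓ : ∀ x : E, x ≠ 0 → ‖ℓ x‖ = 1 ∧ ℓ x x = ‖x‖)
    (huniq : ∀ x : E, x ≠ 0 → ∀ g : E →L[ℝ] ℝ, ‖g‖ = 1 → g x = ‖x‖ → g = ℓ x)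
    (hgateaux : ∀ x : E, x ≠ 0 → ∀ v : E,
      Tendsto (fun t : ℝ => (‖x + t • v‖ - ‖x‖) / t) (nhdsWithin 0 {(0:ℝ)}ᶜ)
        (nhds (ℓ x v)))
    (C : Set E) (hC : Convex ℝ C) (hCcpt : IsCompact C) (h0 : (0:E) ∈ C)
    (f : E → E) (hf : MapsTo f C C) (hlip : LipschitzOnWith 1 f C)
    (y : ℝ → E) (hy : ∀ l ∈ Ioo (0:ℝ) 1, y l ∈ C ∧ l • f (y l) = y l) :
    ∃ ybar : E, Tendsto y (nhdsWithin 1 (Ioo (0:ℝ) 1)) (nhds ybar) :=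
  ylam_converges_smooth_norm_general ℓ hgateaux C hCcpt f hf hlip y hy
end

section
/- Let H be a real Hilbert space, C ⊆ H closed convex bounded with 0 ∈ C, and f : C → C 1-Lipschitz. For λ ∈ (0,1) let y_λ ∈ C be the unique point with λ f(y_λ) = y_λ. Then y_λ converges weakly as λ → 1 to the orthogonal projection of 0 onto the set Fix(f) of fixed points of f. -/
/-!
For fixed points `a = l • f a` and `z = μ • f z` of rescalings of a nonexpansive `f`, expanding
`‖a - z‖² = ⟪l • (f a - f z) + (l - μ) • f z, a - z⟫` gives
`(1 - l) ‖a - z‖² ≤ (l - μ) ⟪f z, a - z⟫`.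
With `z = y μ` and `μ < l` this says `⟪y μ, y l - y μ⟫ ≥ 0`, hence
`‖y l - y μ‖² ≤ ‖y l‖² - ‖y μ‖²`: the norms increase and are bounded, so `y` is Cauchy as `l → 1`
and even converges strongly, to a fixed point `x` of `f`. With `z ∈ Fix f` and `μ = 1` it says
`⟪y l, y l - z⟫ ≤ 0`, so `⟪x, x - z⟫ ≤ 0` and therefore `‖x‖ ≤ ‖z‖`.
-/

open Set Filter Topology
open scoped RealInnerProductSpace

theorem cauchy_map_of_dist_sq_le {α E : Type*} [PseudoMetricSpace E] {L : Filter α} [L.NeBot]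
    {u : α → E} {φ : α → ℝ} (hφ : Cauchy (L.map φ))
    (h : ∀ᶠ p in L ×ˢ L, dist (u p.1) (u p.2) ^ 2 ≤ dist (φ p.1) (φ p.2)) :
    Cauchy (L.map u) := by
  rw [cauchy_map_iff', tendsto_uniformity_iff_dist_tendsto_zero] at hφ ⊢
  have hsqrt := hφ.sqrt
  rw [Real.sqrt_zero] at hsqrt
  exact squeeze_zero' (.of_forall fun _ => dist_nonneg)
    (h.mono fun _ hp => Real.le_sqrt_of_sq_le hp) hsqrt

section InnerProductSpace

variable {E : Type*} [NormedAddCommGroup E] [InnerProductSpace ℝ E]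

theorem norm_le_of_inner_sub_nonpos {x z : E} (h : ⟪x, x - z⟫ ≤ 0) : ‖x‖ ≤ ‖z‖ := by
  have hle : ‖x‖ ^ 2 ≤ ‖x‖ * ‖z‖ := by
    rw [inner_sub_right, real_inner_self_eq_norm_sq] at h
    linarith [real_inner_le_norm x z]
  rcases (norm_nonneg x).eq_or_lt with hx | hx
  · rw [← hx]; exact norm_nonneg z
  · nlinarith

theorem norm_sub_sq_le_of_inner_sub_nonneg {u v : E} (h : 0 ≤ ⟪u, v - u⟫) :
    ‖v - u‖ ^ 2 ≤ ‖v‖ ^ 2 - ‖u‖ ^ 2 := by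
  have hv : ‖v‖ ^ 2 = ‖u + (v - u)‖ ^ 2 := by rw [add_sub_cancel]
  rw [hv, norm_add_sq_real]
  linarith

theorem one_sub_mul_norm_sub_sq_le {f : E → E} {a z : E} {l μ : ℝ} (hl : 0 ≤ l)
    (ha : l • f a = a) (hz : μ • f z = z) (hf : dist (f a) (f z) ≤ dist a z) :
    (1 - l) * ‖a - z‖ ^ 2 ≤ (l - μ) * ⟪f z, a - z⟫ := by
  rw [dist_eq_norm, dist_eq_norm] at hf
  have hsplit : a - z = l • (f a - f z) + (l - μ) • f z := by
    conv_lhs => rw [← ha, ← hz]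
    module
  have hCS : ⟪f a - f z, a - z⟫ ≤ ‖a - z‖ ^ 2 :=
    (real_inner_le_norm _ _).trans (by nlinarith [norm_nonneg (a - z), norm_nonneg (f a - f z)])
  have hexp : ‖a - z‖ ^ 2 = l * ⟪f a - f z, a - z⟫ + (l - μ) * ⟪f z, a - z⟫ := by
    rw [← real_inner_self_eq_norm_sq]
    nth_rw 1 [hsplit]
    rw [inner_add_left, real_inner_smul_left, real_inner_smul_left]
  nlinarith

theorem inner_sub_nonpos_of_smul_fixed {f : E → E} {a z : E} {l : ℝ} (hl : 0 ≤ l) (hl1 : l < 1)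
    (ha : l • f a = a) (hz : f z = z) (hf : dist (f a) (f z) ≤ dist a z) : ⟪a, a - z⟫ ≤ 0 := by
  have key := one_sub_mul_norm_sub_sq_le hl ha (by rwa [one_smul]) hf
  rw [hz, ← real_inner_self_eq_norm_sq] at key
  have : ⟪a - z, a - z⟫ + ⟪z, a - z⟫ ≤ 0 := by nlinarith
  rwa [← inner_add_left, sub_add_cancel] at this

theorem inner_sub_nonneg_of_smul_fixed {f : E → E} {a z : E} {l μ : ℝ} (hμ : 0 ≤ μ)
    (hμl : μ < l) (hl1 : l ≤ 1) (ha : l • f a = a) (hz : μ • f z = z)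
    (hf : dist (f a) (f z) ≤ dist a z) : 0 ≤ ⟪z, a - z⟫ := by
  have key := one_sub_mul_norm_sub_sq_le (hμ.trans hμl.le) ha hz hf
  have hfz : 0 ≤ ⟪f z, a - z⟫ := by
    nlinarith [mul_nonneg (sub_nonneg.2 hl1) (sq_nonneg ‖a - z‖)]
  calc 0 ≤ μ * ⟪f z, a - z⟫ := mul_nonneg hμ hfz
    _ = ⟪z, a - z⟫ := by rw [← real_inner_smul_left, hz]

end InnerProductSpace

section FixedPointCurve

variable {H : Type*} [NormedAddCommGroup H] [InnerProductSpace ℝ H] {C : Set H} {f : H → H}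
  {y : ℝ → H}

theorem norm_sub_sq_le_norm_sq_sub_norm_sq_of_le (hlip : LipschitzOnWith 1 f C)
    (hy : ∀ l ∈ Ioo (0:ℝ) 1, y l ∈ C ∧ l • f (y l) = y l) {μ l : ℝ} (hμ : μ ∈ Ioo (0:ℝ) 1)
    (hl : l ∈ Ioo (0:ℝ) 1) (hμl : μ ≤ l) : ‖y l - y μ‖ ^ 2 ≤ ‖y l‖ ^ 2 - ‖y μ‖ ^ 2 := by
  rcases hμl.eq_or_lt with rfl | hlt
  · simp
  refine norm_sub_sq_le_of_inner_sub_nonneg (inner_sub_nonneg_of_smul_fixed hμ.1.le hlt hl.2.le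
    (hy l hl).2 (hy μ hμ).2 ?_)
  simpa using hlip.dist_le_mul _ (hy l hl).1 _ (hy μ hμ).1

theorem cauchy_map_nhdsLT_one_of_smul_fixed (hCbdd : Bornology.IsBounded C)
    (hlip : LipschitzOnWith 1 f C) (hy : ∀ l ∈ Ioo (0:ℝ) 1, y l ∈ C ∧ l • f (y l) = y l) :
    Cauchy ((𝓝[<] (1:ℝ)).map y) := by
  have hmono : MonotoneOn (fun l => ‖y l‖ ^ 2) (Ioo 0 1) := fun μ hμ l hl hμl => by
    linarith [norm_sub_sq_le_norm_sq_sub_norm_sq_of_le hlip hy hμ hl hμl, sq_nonneg ‖y l - y μ‖]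
  obtain ⟨M, hM⟩ := hCbdd.exists_norm_le
  have hbdd : BddAbove ((fun l => ‖y l‖ ^ 2) '' Ioo 0 1) := by
    refine ⟨M ^ 2, ?_⟩
    rintro _ ⟨l, hl, rfl⟩
    exact pow_le_pow_left₀ (norm_nonneg _) (hM _ (hy l hl).1) 2
  refine cauchy_map_of_dist_sq_le
    (hmono.tendsto_nhdsWithin_Ioo_left ⟨1 / 2, by norm_num⟩ hbdd).cauchy_map ?_
  filter_upwards [prod_mem_prod (Ioo_mem_nhdsLT one_pos) (Ioo_mem_nhdsLT one_pos)]
    with ⟨l, μ⟩ ⟨hl, hμ⟩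
  rw [dist_eq_norm, Real.dist_eq]
  rcases le_total μ l with h | h
  · exact (norm_sub_sq_le_norm_sq_sub_norm_sq_of_le hlip hy hμ hl h).trans (le_abs_self _)
  · rw [norm_sub_rev, abs_sub_comm]
    exact (norm_sub_sq_le_norm_sq_sub_norm_sq_of_le hlip hy hl hμ h).trans (le_abs_self _)

theorem map_eq_of_tendsto_smul_fixed (hlip : LipschitzOnWith 1 f C)
    (hy : ∀ l ∈ Ioo (0:ℝ) 1, y l ∈ C ∧ l • f (y l) = y l) {x : H}
    (hx : Tendsto y (𝓝[<] 1) (𝓝 x)) (hxC : x ∈ C) : f x = x := by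
  have hIoo : Ioo (0:ℝ) 1 ∈ 𝓝[<] (1:ℝ) := Ioo_mem_nhdsLT one_pos
  have hfy : Tendsto (f ∘ y) (𝓝[<] 1) (𝓝 (f x)) :=
    (hlip.continuousOn x hxC).tendsto.comp <| tendsto_nhdsWithin_iff.2
      ⟨hx, mem_of_superset hIoo fun l hl => (hy l hl).1⟩
  have hdiv : Tendsto (fun l : ℝ => l⁻¹ • y l) (𝓝[<] 1) (𝓝 x) := by
    simpa using ((tendsto_id.mono_left nhdsWithin_le_nhds).inv₀ one_ne_zero).smul hx
  refine tendsto_nhds_unique hfy (hdiv.congr' ?_)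
  filter_upwards [hIoo] with l hl
  rw [Function.comp_apply, inv_smul_eq_iff₀ hl.1.ne', (hy l hl).2]

end FixedPointCurve

theorem ylam_weak_converges_hilbert_general
    {H : Type*} [NormedAddCommGroup H] [InnerProductSpace ℝ H] [CompleteSpace H]
    (C : Set H) (hCclosed : IsClosed C)
    (hCbdd : Bornology.IsBounded C)
    (f : H → H) (hlip : LipschitzOnWith 1 f C)
    (y : ℝ → H) (hy : ∀ l ∈ Ioo (0:ℝ) 1, y l ∈ C ∧ l • f (y l) = y l) :
    ∃ xstar ∈ C, f xstar = xstar ∧ (∀ z ∈ C, f z = z → ‖xstar‖ ≤ ‖z‖) ∧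
      ∀ v : H, Tendsto (fun l => (inner ℝ (y l) v : ℝ))
        (nhdsWithin 1 (Ioo (0:ℝ) 1)) (nhds (inner ℝ xstar v)) := by
  rw [nhdsWithin_Ioo_eq_nhdsLT one_pos]
  have hIoo : Ioo (0:ℝ) 1 ∈ 𝓝[<] (1:ℝ) := Ioo_mem_nhdsLT one_pos
  obtain ⟨x, hx : Tendsto y (𝓝[<] 1) (𝓝 x)⟩ :=
    CompleteSpace.complete (cauchy_map_nhdsLT_one_of_smul_fixed hCbdd hlip hy)
  have hxC : x ∈ C := hCclosed.mem_of_tendsto hx (mem_of_superset hIoo fun l hl => (hy l hl).1)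
  refine ⟨x, hxC, map_eq_of_tendsto_smul_fixed hlip hy hx hxC, fun z hz hfz => ?_,
    fun v => hx.inner tendsto_const_nhds⟩
  refine norm_le_of_inner_sub_nonpos (le_of_tendsto (hx.inner (hx.sub tendsto_const_nhds)) ?_)
  filter_upwards [hIoo] with l hl
  refine inner_sub_nonpos_of_smul_fixed hl.1.le hl.2 (hy l hl).2 hfz ?_
  simpa using hlip.dist_le_mul _ (hy l hl).1 _ hz

theorem ylam_weak_converges_hilbert
    {H : Type*} [NormedAddCommGroup H] [InnerProductSpace ℝ H] [CompleteSpace H]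
    (C : Set H) (hCclosed : IsClosed C) (hC : Convex ℝ C)
    (hCbdd : Bornology.IsBounded C) (h0 : (0:H) ∈ C)
    (f : H → H) (hf : MapsTo f C C) (hlip : LipschitzOnWith 1 f C)
    (y : ℝ → H) (hy : ∀ l ∈ Ioo (0:ℝ) 1, y l ∈ C ∧ l • f (y l) = y l) :
    ∃ xstar ∈ C, f xstar = xstar ∧ (∀ z ∈ C, f z = z → ‖xstar‖ ≤ ‖z‖) ∧
      ∀ v : H, Tendsto (fun l => (inner ℝ (y l) v : ℝ))
        (nhdsWithin 1 (Ioo (0:ℝ) 1)) (nhds (inner ℝ xstar v)) :=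
  ylam_weak_converges_hilbert_general C hCclosed hCbdd f hlip y hy
end

section
/- Let H be a real Hilbert space and f : H → H a 1-Lipschitz map. Suppose (y_n) is a bounded sequence in H weakly converging to y*, with y_n − f(y_n) → 0 strongly. Then y* is a fixed point of f (demiclosedness of Id − f at 0). -/
/-! Put `u = y* - f y*` and `εₙ = ‖yₙ - f yₙ‖`. Nonexpansiveness gives
`‖(yₙ - y*) + u‖ = ‖yₙ - f y*‖ ≤ ‖yₙ - y*‖ + εₙ`; squaring and expanding,
`2⟪yₙ - y*, u⟫ + ‖u‖² ≤ 2εₙ‖yₙ - y*‖ + εₙ²`. The inner product tends to `0` by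
weak convergence and the right side tends to `0` by boundedness, so `‖u‖² ≤ 0`. -/

open Filter Topology

open scoped RealInnerProductSpace

theorem LipschitzWith.norm_sub_apply_le {E : Type*} [SeminormedAddCommGroup E] {f : E → E}
    (hf : LipschitzWith 1 f) (x z : E) : ‖x - f z‖ ≤ ‖x - z‖ + ‖x - f x‖ :=
  calc ‖x - f z‖ = ‖(f x - f z) + (x - f x)‖ := by congr 1; abel
    _ ≤ ‖f x - f z‖ + ‖x - f x‖ := norm_add_le _ _
    _ ≤ ‖x - z‖ + ‖x - f x‖ := by
      gcongr
      simpa only [NNReal.coe_one, one_mul, dist_eq_norm] using hf.dist_le_mul x z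

section InnerProductSpace

variable {E : Type*} [NormedAddCommGroup E] [InnerProductSpace ℝ E]

theorem two_mul_inner_add_norm_sq_le_of_norm_add_le {a u : E} {e : ℝ}
    (h : ‖a + u‖ ≤ ‖a‖ + e) : 2 * ⟪a, u⟫ + ‖u‖ ^ 2 ≤ 2 * e * ‖a‖ + e ^ 2 := by
  have hsq : ‖a + u‖ ^ 2 ≤ (‖a‖ + e) ^ 2 := pow_le_pow_left₀ (norm_nonneg _) h 2
  rw [norm_add_sq_real] at hsq
  linarith

theorem eq_zero_of_tendsto_inner_of_norm_add_le {ι : Type*} {l : Filter ι} [l.NeBot]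
    {a : ι → E} {u : E} {e : ι → ℝ}
    (ha : IsBoundedUnder (· ≤ ·) l (fun i => ‖a i‖))
    (hinner : Tendsto (fun i => ⟪a i, u⟫) l (𝓝 0)) (he : Tendsto e l (𝓝 0))
    (hle : ∀ i, ‖a i + u‖ ≤ ‖a i‖ + e i) : u = 0 := by
  have hlhs : Tendsto (fun i => 2 * ⟪a i, u⟫ + ‖u‖ ^ 2) l (𝓝 (‖u‖ ^ 2)) := by
    simpa using (hinner.const_mul 2).add_const (‖u‖ ^ 2)
  have hrhs : Tendsto (fun i => 2 * e i * ‖a i‖ + e i ^ 2) l (𝓝 0) := by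
    have hea : Tendsto (fun i => e i * ‖a i‖) l (𝓝 0) :=
      he.zero_mul_isBoundedUnder_le (by simpa [Function.comp_def] using ha)
    simpa [mul_assoc] using (hea.const_mul 2).add (he.pow 2)
  have hu : ‖u‖ ^ 2 ≤ 0 := le_of_tendsto_of_tendsto' hlhs hrhs
    fun i => two_mul_inner_add_norm_sq_le_of_norm_add_le (hle i)
  exact norm_eq_zero.mp <| pow_eq_zero_iff two_ne_zero |>.mp <|
    le_antisymm hu (by positivity)

end InnerProductSpace

theorem demiclosedness_id_sub_f_general
    {H : Type*} [NormedAddCommGroup H] [InnerProductSpace ℝ H]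
    (f : H → H) (hlip : LipschitzWith 1 f)
    (y : ℕ → H) (hbdd : Bornology.IsBounded (Set.range y))
    (ystar : H)
    (hweak : ∀ v : H, Tendsto (fun n => (inner ℝ (y n) v : ℝ)) atTop
      (nhds (inner ℝ ystar v)))
    (hstrong : Tendsto (fun n => y n - f (y n)) atTop (nhds 0)) :
    f ystar = ystar := by
  obtain ⟨C, hC⟩ := hbdd.exists_norm_le
  have hbdd' : IsBoundedUnder (· ≤ ·) atTop (fun n => ‖y n - ystar‖) :=
    isBoundedUnder_of ⟨C + ‖ystar‖, fun n =>
      (norm_sub_le _ _).trans (add_le_add_left (hC _ (Set.mem_range_self n)) _)⟩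
  have hinner : Tendsto (fun n => ⟪y n - ystar, ystar - f ystar⟫) atTop (𝓝 0) := by
    simpa [inner_sub_left] using (hweak (ystar - f ystar)).sub_const ⟪ystar, ystar - f ystar⟫
  have hresidual : Tendsto (fun n => ‖y n - f (y n)‖) atTop (𝓝 0) := by
    simpa using hstrong.norm
  have hle : ∀ n, ‖(y n - ystar) + (ystar - f ystar)‖ ≤ ‖y n - ystar‖ + ‖y n - f (y n)‖ :=
    fun n => by simpa using hlip.norm_sub_apply_le (y n) ystar
  exact (sub_eq_zero.mp <|
    eq_zero_of_tendsto_inner_of_norm_add_le hbdd' hinner hresidual hle).symm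

theorem demiclosedness_id_sub_f
    {H : Type*} [NormedAddCommGroup H] [InnerProductSpace ℝ H] [CompleteSpace H]
    (f : H → H) (hlip : LipschitzWith 1 f)
    (y : ℕ → H) (hbdd : Bornology.IsBounded (Set.range y))
    (ystar : H)
    (hweak : ∀ v : H, Tendsto (fun n => (inner ℝ (y n) v : ℝ)) atTop
      (nhds (inner ℝ ystar v)))
    (hstrong : Tendsto (fun n => y n - f (y n)) atTop (nhds 0)) :
    f ystar = ystar :=
  demiclosedness_id_sub_f_general f hlip y hbdd ystar hweak hstrong
end

section
/- Let E be a real normed space with smooth norm (for x ≠ 0, ℓ_x is the unique norm-one functional with ℓ_x(x) = ‖x‖), C ⊆ E convex compact, and f : C → C 1-Lipschitz. For x ∈ C define y_x ∈ Fix(f) as the limit as λ → 1 of the fixed points of y ↦ λ f(y) + (1−λ)x, characterized by ℓ_{y_x − z}(y_x − x) ≤ 0 for all z ∈ Fix(f) \ {y_x}. Then the map x ↦ y_x is 1-Lipschitz, and it is a retraction of C onto Fix(f) (it equals the identity on Fix(f)). -/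
open Set

theorem retraction_onto_fixed_points
    {E : Type*} [NormedAddCommGroup E] [NormedSpace ℝ E]
    (ℓ : E → (E →L[ℝ] ℝ))
    (hℓ : ∀ v : E, v ≠ 0 → ‖ℓ v‖ = 1 ∧ ℓ v v = ‖v‖)
    (huniq : ∀ v : E, v ≠ 0 → ∀ g : E →L[ℝ] ℝ, ‖g‖ = 1 → g v = ‖v‖ → g = ℓ v)
    (C : Set E) (hC : Convex ℝ C) (hCcpt : IsCompact C)
    (f : E → E) (hf : MapsTo f C C) (hlip : LipschitzOnWith 1 f C)
    (yx : E → E)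
    (hyx : ∀ x ∈ C, yx x ∈ C ∧ f (yx x) = yx x ∧
      ∀ z ∈ C, f z = z → z ≠ yx x → ℓ (yx x - z) (yx x - x) ≤ 0) :
    LipschitzOnWith 1 yx C ∧ ∀ x ∈ C, f x = x → yx x = x := by
  have hretr : ∀ x ∈ C, f x = x → yx x = x := by
    intro x hx hfx
    by_contra hne
    obtain ⟨hmem, hfix, hmin⟩ := hyx x hx
    have h := hmin x hx hfx (fun h => hne h.symm)
    have hv : yx x - x ≠ 0 := sub_ne_zero.mpr (fun h => hne h)
    have := (hℓ _ hv).2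
    have hpos : (0:ℝ) < ‖yx x - x‖ := norm_pos_iff.mpr hv
    linarith
  refine ⟨?_, hretr⟩
  rw [lipschitzOnWith_iff_dist_le_mul]
  intro x hx x' hx'
  rcases eq_or_ne (yx x) (yx x') with h | h
  · simp [h, dist_nonneg]
  · set y := yx x
    set y' := yx x'
    obtain ⟨hyC, hyfix, hmin⟩ := hyx x hx
    obtain ⟨hy'C, hy'fix, hmin'⟩ := hyx x' hx'
    have hv : y - y' ≠ 0 := sub_ne_zero.mpr h
    have hv' : y' - y ≠ 0 := sub_ne_zero.mpr h.symm
    have h1 : ℓ (y - y') (y - x) ≤ 0 := hmin y' hy'C hy'fix h.symm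
    have h2 : ℓ (y' - y) (y' - x') ≤ 0 := hmin' y hyC hyfix h
    have hneg : ℓ (y' - y) = - ℓ (y - y') := by
      have h3 : (- ℓ (y - y')) (y' - y) = ‖y' - y‖ := by
        simp [norm_sub_rev y' y, ← (hℓ _ hv).2, neg_sub y y']
      exact (huniq _ hv' _ (by simp [(hℓ _ hv).1]) h3).symm
    have h2' : 0 ≤ ℓ (y - y') (y' - x') := by
      rw [hneg] at h2; simpa using h2
    have key : ‖y - y'‖ ≤ ℓ (y - y') (x - x') := by
      have ha : y - y' = (y - x) - (y' - x') + (x - x') := by abel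
      have : ℓ (y - y') (y - y') = ℓ (y - y') (y - x) - ℓ (y - y') (y' - x')
          + ℓ (y - y') (x - x') := by
        rw [show (ℓ (y - y')) (y - y')
            = (ℓ (y - y')) ((y - x) - (y' - x') + (x - x')) from congrArg _ ha,
          map_add, map_sub]
      rw [← (hℓ _ hv).2, this]; linarith
    calc dist y y' = ‖y - y'‖ := dist_eq_norm y y'
      _ ≤ ℓ (y - y') (x - x') := key
      _ ≤ ‖ℓ (y - y')‖ * ‖x - x'‖ := (le_abs_self _).trans ((ℓ (y - y')).le_opNorm _)
      _ = 1 * dist x x' := by rw [(hℓ _ hv).1, dist_eq_norm]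
end

section
/- In (ℝ², ‖·‖₁) with ‖(x,y)‖₁ = |x| + |y|, let T = {(x,y) : −1/2 ≤ y ≤ −|x| + 1/2}, fix α ∈ (0,1), and let ε : [−1/2, 1/2] → ℝ be (1−α)-Lipschitz with ε(−1/2) = 0. Then the map f(x,y) = (x + ε(y), α(y + 1/2) − 1/2) maps T into T and is 1-Lipschitz for ‖·‖₁. -/
open Set

theorem triangle_map_lipschitz_l1
    (α : ℝ) (hα : α ∈ Ioo (0:ℝ) 1)
    (ε : ℝ → ℝ)
    (hε : ∀ y ∈ Icc (-(1/2):ℝ) (1/2), ∀ y' ∈ Icc (-(1/2):ℝ) (1/2),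
      |ε y - ε y'| ≤ (1 - α) * |y - y'|)
    (hε0 : ε (-(1/2)) = 0)
    (T : Set (ℝ × ℝ))
    (hT : T = {p : ℝ × ℝ | -(1/2) ≤ p.2 ∧ p.2 ≤ -|p.1| + 1/2})
    (f : ℝ × ℝ → ℝ × ℝ)
    (hfdef : ∀ p : ℝ × ℝ, f p = (p.1 + ε p.2, α * (p.2 + 1/2) - 1/2)) :
    MapsTo f T T ∧
      ∀ p ∈ T, ∀ q ∈ T,
        |(f p).1 - (f q).1| + |(f p).2 - (f q).2| ≤ |p.1 - q.1| + |p.2 - q.2| := by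
  obtain ⟨hα0, hα1⟩ := hα
  have hmem : ∀ p : ℝ × ℝ, p ∈ T → p.2 ∈ Icc (-(1/2):ℝ) (1/2) := by
    intro p hp
    rw [hT] at hp
    obtain ⟨h1, h2⟩ := hp
    exact ⟨h1, h2.trans (by have := abs_nonneg p.1; linarith)⟩
  constructor
  · intro p hp
    have hy := hmem p hp
    rw [hT] at hp ⊢
    obtain ⟨h1, h2⟩ := hp
    rw [hfdef]
    have hεb : |ε p.2| ≤ (1 - α) * (p.2 + 1/2) := by
      have := hε p.2 hy (-(1/2)) (by constructor <;> norm_num)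
      rw [hε0, sub_zero] at this
      calc |ε p.2| ≤ (1 - α) * |p.2 - -(1/2)| := this
        _ = (1 - α) * (p.2 + 1/2) := by
            rw [abs_of_nonneg (by linarith [hy.1])]; ring_nf
    have habs : |p.1 + ε p.2| ≤ |p.1| + (1 - α) * (p.2 + 1/2) :=
      (abs_add_le _ _).trans (by linarith)
    constructor
    · simp only
      nlinarith [hy.1]
    · simp only
      nlinarith [abs_nonneg p.1]
  · intro p hp q hq
    have hy := hmem p hp
    have hy' := hmem q hq
    have h1 := hε p.2 hy q.2 hy'
    rw [hfdef p, hfdef q]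
    simp only
    have e1 : |p.1 + ε p.2 - (q.1 + ε q.2)| ≤ |p.1 - q.1| + |ε p.2 - ε q.2| := by
      have := abs_add_le (p.1 - q.1) (ε p.2 - ε q.2)
      calc |p.1 + ε p.2 - (q.1 + ε q.2)| = |(p.1 - q.1) + (ε p.2 - ε q.2)| := by ring_nf
        _ ≤ _ := abs_add_le _ _
    have e2 : |α * (p.2 + 1/2) - 1/2 - (α * (q.2 + 1/2) - 1/2)| = α * |p.2 - q.2| := by
      rw [show α * (p.2 + 1/2) - 1/2 - (α * (q.2 + 1/2) - 1/2) = α * (p.2 - q.2) by ring,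
        abs_mul, abs_of_pos hα0]
    rw [e2]
    nlinarith [abs_nonneg (p.2 - q.2)]
end

section
/- There exists a convex compact set C ⊆ ℝ² containing 0 and a map f : C → C that is 1-Lipschitz for the ℓ¹ norm such that the family (y_λ) of unique fixed points of x ↦ λ f(x), λ ∈ (0,1), does not converge as λ → 1. -/
open Set Filter Real Topology

/-!
Let `g w = w sin (log w)` for `w > 0` and `g w = 0` otherwise (`logOsc`); its derivative
`sin ∘ log + cos ∘ log` is bounded by `2`, so `g` is `2`-Lipschitz. The map
`f (x, y) = (1, π (y + g (1 - x) / 4))`, with `π` the projection onto `[-1, 1]` (`oscMap`), is then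
`1`-Lipschitz for the `ℓ¹` norm and maps the ball of radius `2` into itself. For `λ ∈ (0, 1)` the
point `y_λ = (λ, λ sin (log (1 - λ)) / 4)` (`oscFixedPoint`) satisfies
`y_λ.2 + g (1 - λ) / 4 = sin (log (1 - λ)) / 4`, hence is the fixed point of `λ f`. Its second
coordinate oscillates as `λ → 1`, because `log (1 - λ) → -∞` and `sin` has no limit at `-∞`.
-/

theorem Function.Periodic.eq_of_tendsto_atBot {R α : Type*} [AddCommGroup R] [LinearOrder R]
    [IsOrderedAddMonoid R] [Archimedean R] [TopologicalSpace α] [T2Space α]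
    {f : R → α} {c : R} {a : α} (hf : Function.Periodic f c) (hc : 0 < c)
    (h : Tendsto f atBot (𝓝 a)) (x : R) : f x = a := by
  have hshift : Tendsto (fun n : ℕ => x + n • -c) atTop atBot :=
    tendsto_atBot_add_const_left _ x <| tendsto_id.atTop_nsmul_neg_const (neg_neg_of_pos hc)
  have hconst : f ∘ (fun n : ℕ => x + n • -c) = fun _ => f x :=
    funext fun n => (hf.neg.nsmul n) x
  exact tendsto_nhds_unique (by rw [hconst]; exact tendsto_const_nhds) (h.comp hshift)

theorem not_tendsto_sin_log_nhdsGT_zero (a : ℝ) :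
    ¬ Tendsto (fun t => sin (log t)) (𝓝[>] 0) (𝓝 a) := by
  intro h
  have hsin : Tendsto sin atBot (𝓝 a) := by
    simpa [Function.comp_def] using h.comp tendsto_exp_atBot_nhdsGT
  have h0 := sin_periodic.eq_of_tendsto_atBot two_pi_pos hsin 0
  have h1 := sin_periodic.eq_of_tendsto_atBot two_pi_pos hsin (π / 2)
  simp only [sin_zero, sin_pi_div_two] at h0 h1
  exact one_ne_zero (h1.trans h0.symm)

noncomputable def logOsc (w : ℝ) : ℝ := max w 0 * sin (log w)

section logOsc

variable {w : ℝ}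

lemma logOsc_of_nonpos (hw : w ≤ 0) : logOsc w = 0 := by
  simp [logOsc, max_eq_right hw]

lemma logOsc_of_pos (hw : 0 < w) : logOsc w = w * sin (log w) := by
  simp [logOsc, max_eq_left hw.le]

lemma abs_logOsc_le (w : ℝ) : |logOsc w| ≤ max w 0 := by
  rw [logOsc, abs_mul, abs_of_nonneg (le_max_right w 0)]
  exact mul_le_of_le_one_right (le_max_right w 0) (abs_sin_le_one _)

lemma hasDerivAt_logOsc (hw : 0 < w) :
    HasDerivAt logOsc (sin (log w) + cos (log w)) w := by
  have h : HasDerivAt (fun x => x * sin (log x))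
      (1 * sin (log w) + w * (cos (log w) * w⁻¹)) w :=
    (hasDerivAt_id' w).mul ((hasDerivAt_sin _).comp w (hasDerivAt_log hw.ne'))
  have heq : (fun x => x * sin (log x)) =ᶠ[𝓝 w] logOsc := by
    filter_upwards [Ioi_mem_nhds hw] with x hx
    rw [logOsc_of_pos hx]
  refine (h.congr_of_eventuallyEq heq.symm).congr_deriv ?_
  rw [one_mul, mul_comm (cos _), mul_inv_cancel_left₀ hw.ne']

lemma lipschitzOnWith_logOsc_Ioi : LipschitzOnWith 2 logOsc (Ioi 0) := by
  refine (convex_Ioi 0).lipschitzOnWith_of_nnnorm_hasDerivWithin_le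
    (fun x hx => (hasDerivAt_logOsc hx).hasDerivWithinAt) fun x _ => ?_
  rw [← NNReal.coe_le_coe, coe_nnnorm, norm_eq_abs]
  calc |sin (log x) + cos (log x)| ≤ |sin (log x)| + |cos (log x)| := abs_add_le _ _
    _ ≤ 2 := by linarith [abs_sin_le_one (log x), abs_cos_le_one (log x)]

lemma lipschitzWith_logOsc : LipschitzWith 2 logOsc := by
  refine LipschitzWith.of_dist_le_mul fun a b => ?_
  wlog hba : b ≤ a generalizing a b
  · simpa only [dist_comm] using this b a (le_of_not_ge hba)
  rw [dist_eq_norm, dist_eq_norm, norm_eq_abs, norm_eq_abs, abs_of_nonneg (sub_nonneg.2 hba)]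
  rcases le_or_gt a 0 with ha | ha
  · simp [logOsc_of_nonpos ha, logOsc_of_nonpos (hba.trans ha), hba]
  rcases le_or_gt b 0 with hb | hb
  · rw [logOsc_of_nonpos hb, sub_zero]
    have := abs_logOsc_le a
    rw [max_eq_left ha.le] at this
    push_cast
    linarith
  · simpa [dist_eq_norm, abs_of_nonneg (sub_nonneg.2 hba)] using
      lipschitzOnWith_logOsc_Ioi.dist_le_mul a ha b hb

end logOsc

noncomputable def oscMap (p : WithLp 1 (ℝ × ℝ)) : WithLp 1 (ℝ × ℝ) :=
  WithLp.toLp 1 (1, projIcc (-1 : ℝ) 1 (by norm_num) (p.snd + logOsc (1 - p.fst) / 4))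

noncomputable def oscFixedPoint (l : ℝ) : WithLp 1 (ℝ × ℝ) :=
  WithLp.toLp 1 (l, l * sin (log (1 - l)) / 4)

lemma lipschitzWith_oscMap : LipschitzWith 1 oscMap := by
  refine LipschitzWith.of_dist_le_mul fun p q => ?_
  have hosc : |logOsc (1 - p.fst) - logOsc (1 - q.fst)| ≤ 2 * |p.fst - q.fst| := by
    simpa [dist_eq_norm, abs_sub_comm] using
      lipschitzWith_logOsc.dist_le_mul (1 - p.fst) (1 - q.fst)
  simp only [WithLp.prod_dist_eq_of_L1, oscMap, WithLp.toLp_fst, WithLp.toLp_snd, dist_self,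
    zero_add, NNReal.coe_one, one_mul, Real.dist_eq]
  refine (abs_projIcc_sub_projIcc _).trans (abs_le.2 ⟨?_, ?_⟩) <;>
    linarith [abs_le.1 hosc, le_abs_self (p.snd - q.snd), neg_abs_le (p.snd - q.snd),
      abs_nonneg (p.fst - q.fst)]

lemma oscMap_mem_closedBall (p : WithLp 1 (ℝ × ℝ)) : oscMap p ∈ Metric.closedBall 0 2 := by
  have h := (projIcc (-1 : ℝ) 1 (by norm_num) (p.snd + logOsc (1 - p.fst) / 4)).2
  rw [mem_closedBall_zero_iff, oscMap, WithLp.prod_norm_eq_of_L1]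
  simp only [WithLp.toLp_fst, WithLp.toLp_snd, norm_one, norm_eq_abs]
  linarith [abs_le.2 h]

lemma oscFixedPoint_mem_closedBall {l : ℝ} (hl : l ∈ Ioo 0 1) :
    oscFixedPoint l ∈ Metric.closedBall 0 2 := by
  rw [mem_closedBall_zero_iff, oscFixedPoint, WithLp.prod_norm_eq_of_L1]
  simp only [WithLp.toLp_fst, WithLp.toLp_snd, norm_eq_abs, abs_div, abs_mul, abs_of_pos hl.1]
  have := mul_le_mul hl.2.le (abs_sin_le_one (log (1 - l))) (abs_nonneg _) zero_le_one
  norm_num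
  linarith [hl.2]

lemma smul_oscMap_oscFixedPoint {l : ℝ} (hl : l ∈ Ioo 0 1) :
    l • oscMap (oscFixedPoint l) = oscFixedPoint l := by
  have hsum : l * sin (log (1 - l)) / 4 + logOsc (1 - l) / 4 = sin (log (1 - l)) / 4 := by
    rw [logOsc_of_pos (sub_pos.2 hl.2)]; ring
  have hmem : sin (log (1 - l)) / 4 ∈ Icc (-1 : ℝ) 1 := by
    constructor <;> linarith [neg_one_le_sin (log (1 - l)), sin_le_one (log (1 - l))]
  simp only [oscMap, oscFixedPoint, WithLp.toLp_fst, WithLp.toLp_snd, hsum, projIcc_of_mem _ hmem]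
  rw [← WithLp.toLp_smul, Prod.smul_mk, smul_eq_mul, smul_eq_mul, mul_one, mul_div_assoc]

lemma not_tendsto_oscFixedPoint (L : WithLp 1 (ℝ × ℝ)) :
    ¬ Tendsto oscFixedPoint (𝓝[Ioo 0 1] 1) (𝓝 L) := by
  intro h
  have hsnd : Tendsto (fun l => l * sin (log (1 - l)) / 4) (𝓝[Ioo 0 1] 1) (𝓝 L.snd) :=
    ((WithLp.continuous_snd 1 ℝ ℝ).tendsto L).comp h
  have hid : Tendsto (fun l : ℝ => l) (𝓝[Ioo 0 1] 1) (𝓝 1) :=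
    tendsto_nhdsWithin_of_tendsto_nhds tendsto_id
  have hsin : Tendsto (fun l => sin (log (1 - l))) (𝓝[Ioo 0 1] 1) (𝓝 (4 * L.snd / 1)) := by
    refine ((hsnd.const_mul 4).div hid one_ne_zero).congr' ?_
    filter_upwards [self_mem_nhdsWithin] with l hl
    simp only [Pi.div_apply]
    field_simp [hl.1.ne']
  have hflip : Tendsto (fun t : ℝ => 1 - t) (𝓝[>] 0) (𝓝[Ioo 0 1] 1) := by
    refine tendsto_nhdsWithin_iff.2 ⟨?_, ?_⟩
    · simpa using (tendsto_id.const_sub 1).mono_left (nhdsWithin_le_nhds (a := (0 : ℝ)))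
    · filter_upwards [Ioo_mem_nhdsGT one_pos] with t ht
      exact ⟨by linarith [ht.2], by linarith [ht.1]⟩
  exact not_tendsto_sin_log_nhdsGT_zero _ (by simpa [Function.comp_def] using hsin.comp hflip)

theorem exists_nonconvergent_ylam_l1 :
    ∃ C : Set (WithLp 1 (ℝ × ℝ)), Convex ℝ C ∧ IsCompact C ∧ (0 : WithLp 1 (ℝ × ℝ)) ∈ C ∧
      ∃ f : WithLp 1 (ℝ × ℝ) → WithLp 1 (ℝ × ℝ), MapsTo f C C ∧
        LipschitzOnWith 1 f C ∧
        ∃ y : ℝ → WithLp 1 (ℝ × ℝ),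
          (∀ l ∈ Ioo (0:ℝ) 1, y l ∈ C ∧ l • f (y l) = y l) ∧
          ¬ ∃ L : WithLp 1 (ℝ × ℝ),
            Tendsto y (nhdsWithin 1 (Ioo (0:ℝ) 1)) (nhds L) := by
  refine ⟨Metric.closedBall 0 2, convex_closedBall _ _, isCompact_closedBall _ _,
    Metric.mem_closedBall_self zero_le_two, oscMap, fun p _ => oscMap_mem_closedBall p,
    lipschitzWith_oscMap.lipschitzOnWith, oscFixedPoint, fun l hl => ?_,
    fun ⟨L, hL⟩ => not_tendsto_oscFixedPoint L hL⟩
  exact ⟨oscFixedPoint_mem_closedBall hl, smul_oscMap_oscFixedPoint hl⟩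
end

section
/- There exists a norm ‖·‖ on ℝ², a convex compact set R ⊆ ℝ², and a 1-Lipschitz map f : R → R (with respect to ‖·‖) whose set of fixed points is not convex. -/
theorem exists_norm_with_nonconvex_fixed_point_set :
    ∃ N : (ℝ × ℝ) → ℝ,
      (∀ p, 0 ≤ N p) ∧ (∀ p, N p = 0 ↔ p = 0) ∧
      (∀ (c : ℝ) (p : ℝ × ℝ), N (c • p) = |c| * N p) ∧
      (∀ p q : ℝ × ℝ, N (p + q) ≤ N p + N q) ∧
      ∃ R : Set (ℝ × ℝ), Convex ℝ R ∧ IsCompact R ∧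
        ∃ f : ℝ × ℝ → ℝ × ℝ, Set.MapsTo f R R ∧
          (∀ x ∈ R, ∀ y ∈ R, N (f x - f y) ≤ N (x - y)) ∧
          ¬ Convex ℝ {x ∈ R | f x = x} := by
  refine ⟨fun p => max |p.1| |p.2|, ?_, ?_, ?_, ?_, ?_⟩
  · intro p; exact le_trans (abs_nonneg _) (le_max_left _ _)
  · intro p
    constructor
    · intro h
      have h1 : |p.1| ≤ 0 := h ▸ le_max_left _ _
      have h2 : |p.2| ≤ 0 := h ▸ le_max_right _ _
      have : p.1 = 0 := abs_nonpos_iff.mp h1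
      have : p.2 = 0 := abs_nonpos_iff.mp h2
      exact Prod.ext ‹p.1 = 0› ‹p.2 = 0›
    · rintro rfl; simp
  · intro c p
    simp only [Prod.smul_fst, Prod.smul_snd, smul_eq_mul, abs_mul]
    rcases le_total |p.1| |p.2| with h | h
    · rw [max_eq_right h, max_eq_right (by nlinarith [abs_nonneg c] : |c| * |p.1| ≤ |c| * |p.2|)]
    · rw [max_eq_left h, max_eq_left (by nlinarith [abs_nonneg c] : |c| * |p.2| ≤ |c| * |p.1|)]
  · intro p q
    apply max_le
    · calc |(p + q).1| = |p.1 + q.1| := rfl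
        _ ≤ |p.1| + |q.1| := abs_add_le _ _
        _ ≤ _ := add_le_add (le_max_left _ _) (le_max_left _ _)
    · calc |(p + q).2| = |p.2 + q.2| := rfl
        _ ≤ |p.2| + |q.2| := abs_add_le _ _
        _ ≤ _ := add_le_add (le_max_right _ _) (le_max_right _ _)
  · refine ⟨Set.Icc (-1, -1) (1, 1), convex_Icc _ _, isCompact_Icc,
      fun p => (p.1, |p.1|), ?_, ?_, ?_⟩
    · rintro ⟨x, y⟩ ⟨⟨h1, h2⟩, ⟨h3, h4⟩⟩
      have hx1 : (-1:ℝ) ≤ x := h1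
      have hx2 : x ≤ (1:ℝ) := h3
      have habs : |x| ≤ 1 := abs_le.mpr ⟨hx1, hx2⟩
      exact ⟨⟨hx1, by simpa using (by linarith [abs_nonneg x] : (-1:ℝ) ≤ |x|)⟩, ⟨hx2, habs⟩⟩
    · intro x _ y _
      simp only [Prod.fst_sub, Prod.snd_sub]
      apply max_le
      · exact le_max_left _ _
      · exact le_trans (abs_abs_sub_abs_le_abs_sub _ _) (le_max_left _ _)
    · intro hconv
      have hm : ((-1 : ℝ), (1 : ℝ)) ∈ {x ∈ Set.Icc ((-1 : ℝ), (-1 : ℝ)) (1, 1) | (x.1, |x.1|) = x} := by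
        constructor
        · exact ⟨⟨le_refl _, by norm_num⟩, ⟨by norm_num, le_refl _⟩⟩
        · simp [Prod.ext_iff]
      have hp : ((1 : ℝ), (1 : ℝ)) ∈ {x ∈ Set.Icc ((-1 : ℝ), (-1 : ℝ)) (1, 1) | (x.1, |x.1|) = x} := by
        constructor
        · exact ⟨⟨by norm_num, by norm_num⟩, ⟨le_refl _, le_refl _⟩⟩
        · simp [Prod.ext_iff]
      have h := hconv hm hp (by norm_num : (0:ℝ) ≤ 1/2) (by norm_num : (0:ℝ) ≤ 1/2) (by norm_num)
      have heq : (1/2 : ℝ) • ((-1 : ℝ), (1 : ℝ)) + (1/2 : ℝ) • ((1 : ℝ), (1 : ℝ)) = ((0:ℝ), (1:ℝ)) := by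
        simp [Prod.ext_iff]; norm_num
      rw [heq] at h
      have := h.2
      simp [Prod.ext_iff] at this
end
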